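/- arXiv:2208.04281 — 2 statements merged into one kernel-verified Lean document; each statement's English description precedes it below -/
import Mathlib

section
/- The stabilizer of the unit tensor M_⟨1⟩^⊕n in GL_n(ℂ)×GL_n(ℂ)×GL_n(ℂ) is the semidirect product S_n ⋉ T̃, where S_n acts by simultaneous permutation matrices in all three factors and T̃ = {(λ,μ,ν) : λ,μ,ν diagonal invertible with λμν = Id}; in particular T̃ is a normal subgroup of the stabilizer and every stabilizer element factors uniquely as a permutation element times an element of T̃. -/
/-!
The invariance reads `∑ t, f i t * g j t * h k t = [i = j = k]`. For `i ≠ j` the vector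
`t ↦ f i t * g j t` is killed by the invertible `h` (and symmetrically for `j ≠ k` and `f`), so in
each column `t` the invertible matrices `f`, `g`, `h` are supported on a single common row `s t`.
The equations `∑ t, f i t * g i t * h i t = 1` force `s` to be onto, hence a permutation `σ`, and
then `f`, `g`, `h` are `P_σ` times diagonal matrices whose product is `1`; the factorization is
unique because `P_σ D` determines `σ` and `D` when `D` is invertible. Conjugation by `P_σ D`
permutes the entries of a diagonal matrix, which gives normality of `T̃`.
-/


open scoped BigOperators

/-- The unit tensor `M⟨1⟩^⊕n = Σ eᵢ⊗eᵢ⊗eᵢ` in coordinates. -/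
noncomputable def unitTensor (n : ℕ) : Fin n → Fin n → Fin n → ℂ :=
  fun i j k => if i = j ∧ j = k then 1 else 0

/-- The factorwise action of a triple of matrices on a tensor. -/
noncomputable def actT {n : ℕ} (f g h : Matrix (Fin n) (Fin n) ℂ)
    (T : Fin n → Fin n → Fin n → ℂ) : Fin n → Fin n → Fin n → ℂ :=
  fun i j k => ∑ i', ∑ j', ∑ k', f i i' * g j j' * h k k' * T i' j' k'

/-- The permutation matrix of `σ`: `P_σ eⱼ = e_{σ(j)}`. -/
noncomputable def permMat {n : ℕ} (σ : Equiv.Perm (Fin n)) : Matrix (Fin n) (Fin n) ℂ :=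
  fun i j => if i = σ j then 1 else 0

/-- Membership in the torus `T̃` of triples of invertible diagonal matrices with product `Id`,
recorded via their diagonals. -/
def memTorus {n : ℕ} (f g h : Matrix (Fin n) (Fin n) ℂ) : Prop :=
  ∃ lam mu nu : Fin n → ℂ, (∀ i, lam i * mu i * nu i = 1) ∧
    f = Matrix.diagonal lam ∧ g = Matrix.diagonal mu ∧ h = Matrix.diagonal nu

open Matrix

section MonomialMatrix

variable {n : ℕ}

theorem permMat_mul_diagonal_apply (σ : Equiv.Perm (Fin n)) (d : Fin n → ℂ) (i j : Fin n) :
    (permMat σ * diagonal d) i j = if i = σ j then d j else 0 := by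
  simp [mul_diagonal, permMat]

theorem exists_eq_permMat_mul_diagonal {M : Matrix (Fin n) (Fin n) ℂ} {σ : Equiv.Perm (Fin n)}
    (hM : ∀ i j, i ≠ σ j → M i j = 0) : ∃ d, M = permMat σ * diagonal d := by
  refine ⟨fun j => M (σ j) j, ?_⟩
  ext i j
  rw [permMat_mul_diagonal_apply]
  split_ifs with hij
  · rw [hij]
  · exact hM i j hij

theorem perm_eq_of_permMat_mul_diagonal_eq {σ τ : Equiv.Perm (Fin n)} {d e : Fin n → ℂ}
    (hd : ∀ j, d j ≠ 0) (h : permMat σ * diagonal d = permMat τ * diagonal e) : σ = τ := by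
  refine Equiv.ext fun j => by_contra fun hne => hd j ?_
  have hj := congrFun₂ h (σ j) j
  rwa [permMat_mul_diagonal_apply, permMat_mul_diagonal_apply, if_pos rfl, if_neg hne] at hj

theorem permMat_mul_diagonal_injective (σ : Equiv.Perm (Fin n)) :
    Function.Injective fun d : Fin n → ℂ => permMat σ * diagonal d := by
  intro d e h
  funext j
  have hj := congrFun₂ h (σ j) j
  dsimp only at hj
  rwa [permMat_mul_diagonal_apply, permMat_mul_diagonal_apply, if_pos rfl, if_pos rfl] at hj

theorem permMat_mul_diagonal_comm (σ : Equiv.Perm (Fin n)) (c : Fin n → ℂ) :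
    permMat σ * diagonal c = diagonal (c ∘ σ.symm) * permMat σ := by
  ext i j
  rw [permMat_mul_diagonal_apply, diagonal_mul, permMat]
  split_ifs with hij <;> simp [hij]

theorem permMat_mul_diagonal_conj_diagonal {σ : Equiv.Perm (Fin n)} {d : Fin n → ℂ}
    (hM : IsUnit (permMat σ * diagonal d)) (c : Fin n → ℂ) :
    permMat σ * diagonal d * diagonal c * (permMat σ * diagonal d)⁻¹ = diagonal (c ∘ σ.symm) := by
  calc permMat σ * diagonal d * diagonal c * (permMat σ * diagonal d)⁻¹
      = diagonal (c ∘ σ.symm) * (permMat σ * diagonal d) * (permMat σ * diagonal d)⁻¹ := by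
        rw [Matrix.mul_assoc (permMat σ), (commute_diagonal d c).eq, ← Matrix.mul_assoc,
          permMat_mul_diagonal_comm]
        simp only [Matrix.mul_assoc]
    _ = diagonal (c ∘ σ.symm) :=
        mul_nonsing_inv_cancel_right _ _ ((isUnit_iff_isUnit_det _).mp hM)

end MonomialMatrix

section Stabilizer

variable {n : ℕ} {f g h : Matrix (Fin n) (Fin n) ℂ}

theorem actT_unitTensor_apply (f g h : Matrix (Fin n) (Fin n) ℂ) (i j k : Fin n) :
    actT f g h (unitTensor n) i j k = ∑ t, f i t * g j t * h k t := by
  simp [actT, unitTensor, ite_and, Finset.sum_ite_eq]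

theorem actT_permMat_mul_diagonal_unitTensor_apply (σ : Equiv.Perm (Fin n))
    (lam mu nu : Fin n → ℂ) (t : Fin n) :
    actT (permMat σ * diagonal lam) (permMat σ * diagonal mu) (permMat σ * diagonal nu)
      (unitTensor n) (σ t) (σ t) (σ t) = lam t * mu t * nu t := by
  rw [actT_unitTensor_apply, Finset.sum_eq_single t]
  · simp only [permMat_mul_diagonal_apply, if_true]
  · intro t' _ ht'
    rw [permMat_mul_diagonal_apply, if_neg (σ.injective.ne ht'.symm), zero_mul, zero_mul]
  · simp

theorem exists_apply_ne_zero_of_isUnit {m R : Type*} [Fintype m] [DecidableEq m] [CommRing R]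
    [Nontrivial R] {M : Matrix m m R} (hM : IsUnit M) (j : m) : ∃ i, M i j ≠ 0 := by
  by_contra! hj
  exact not_isUnit_zero (det_eq_zero_of_column_eq_zero j hj ▸ (isUnit_iff_isUnit_det M).mp hM)

theorem eq_of_forall_ne_mul_eq_zero {ι M₀ : Type*} [MulZeroClass M₀] [NoZeroDivisors M₀]
    {x y : ι → M₀} (hxy : ∀ i j, i ≠ j → x i * y j = 0) {a b : ι} (ha : x a ≠ 0)
    (hb : y b ≠ 0) : a = b := by
  by_contra hab
  exact mul_ne_zero ha hb (hxy a b hab)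

theorem stabilizer_mul_eq_zero_left (hh : IsUnit h)
    (hfix : actT f g h (unitTensor n) = unitTensor n) {i j : Fin n} (hij : i ≠ j) (t : Fin n) :
    f i t * g j t = 0 := by
  have hker : h *ᵥ (fun t => f i t * g j t) = 0 := by
    funext k
    have hk := congrFun₃ hfix i j k
    simp only [actT_unitTensor_apply, unitTensor, if_neg (not_and.mpr fun e _ => hij e)] at hk
    simpa [mulVec, dotProduct, mul_comm] using hk
  exact congrFun (eq_zero_of_mulVec_eq_zero ((isUnit_iff_isUnit_det h).mp hh).ne_zero hker) t

theorem stabilizer_mul_eq_zero_right (hf : IsUnit f)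
    (hfix : actT f g h (unitTensor n) = unitTensor n) {j k : Fin n} (hjk : j ≠ k) (t : Fin n) :
    g j t * h k t = 0 := by
  have hker : f *ᵥ (fun t => g j t * h k t) = 0 := by
    funext i
    have hi := congrFun₃ hfix i j k
    simp only [actT_unitTensor_apply, unitTensor, if_neg (not_and.mpr fun _ e => hjk e)] at hi
    simpa [mulVec, dotProduct, mul_assoc] using hi
  exact congrFun (eq_zero_of_mulVec_eq_zero ((isUnit_iff_isUnit_det f).mp hf).ne_zero hker) t

theorem stabilizer_column_support (hf : IsUnit f) (hg : IsUnit g) (hh : IsUnit h)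
    (hfix : actT f g h (unitTensor n) = unitTensor n) (t : Fin n) :
    ∃ a, ∀ i, i ≠ a → f i t = 0 ∧ g i t = 0 ∧ h i t = 0 := by
  have hfg : ∀ i j, i ≠ j → f i t * g j t = 0 := fun _ _ hij =>
    stabilizer_mul_eq_zero_left hh hfix hij t
  have hgh : ∀ j k, j ≠ k → g j t * h k t = 0 := fun _ _ hjk =>
    stabilizer_mul_eq_zero_right hf hfix hjk t
  obtain ⟨a, ha⟩ := exists_apply_ne_zero_of_isUnit hf t
  obtain ⟨b, hb⟩ := exists_apply_ne_zero_of_isUnit hg t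
  obtain rfl : a = b := eq_of_forall_ne_mul_eq_zero hfg ha hb
  refine ⟨a, fun i hi => ⟨?_, ?_, ?_⟩⟩ <;> by_contra hne
  · exact hi (eq_of_forall_ne_mul_eq_zero hfg hne hb)
  · exact hi (eq_of_forall_ne_mul_eq_zero hfg ha hne).symm
  · exact hi (eq_of_forall_ne_mul_eq_zero hgh hb hne).symm

theorem stabilizer_exists_perm (hf : IsUnit f) (hg : IsUnit g) (hh : IsUnit h)
    (hfix : actT f g h (unitTensor n) = unitTensor n) :
    ∃ σ : Equiv.Perm (Fin n), ∀ i t, i ≠ σ t → f i t = 0 ∧ g i t = 0 ∧ h i t = 0 := by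
  choose s hs using stabilizer_column_support hf hg hh hfix
  have hsurj : Function.Surjective s := by
    intro i
    have hii := congrFun₃ hfix i i i
    simp only [actT_unitTensor_apply, unitTensor, and_self, if_true] at hii
    obtain ⟨t, -, ht⟩ := Finset.exists_ne_zero_of_sum_ne_zero (hii ▸ one_ne_zero)
    exact ⟨t, by_contra fun hne => ht (by rw [(hs t i (Ne.symm hne)).1]; ring)⟩
  exact ⟨Equiv.ofBijective s hsurj.bijective_of_finite, fun i t => hs t i⟩

end Stabilizer

/-- The stabilizer of the unit tensor in `GL_n(ℂ)³` is the semidirect product `S_n ⋉ T̃`: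
every stabilizer element factors uniquely as a simultaneous permutation times an element
of `T̃`, and `T̃` is normal in the stabilizer. -/
theorem stabilizer_unitTensor_semidirect {n : ℕ} (f g h : Matrix (Fin n) (Fin n) ℂ)
    (hf : IsUnit f) (hg : IsUnit g) (hh : IsUnit h)
    (hfix : actT f g h (unitTensor n) = unitTensor n) :
    (∃! q : Equiv.Perm (Fin n) × (Fin n → ℂ) × (Fin n → ℂ) × (Fin n → ℂ),
      (∀ i, q.2.1 i * q.2.2.1 i * q.2.2.2 i = 1) ∧
      f = permMat q.1 * Matrix.diagonal q.2.1 ∧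
      g = permMat q.1 * Matrix.diagonal q.2.2.1 ∧
      h = permMat q.1 * Matrix.diagonal q.2.2.2) ∧
    (∀ d₁ d₂ d₃ : Matrix (Fin n) (Fin n) ℂ, memTorus d₁ d₂ d₃ →
      memTorus (f * d₁ * f⁻¹) (g * d₂ * g⁻¹) (h * d₃ * h⁻¹)) := by
  obtain ⟨σ, hσ⟩ := stabilizer_exists_perm hf hg hh hfix
  obtain ⟨lam, rfl⟩ := exists_eq_permMat_mul_diagonal fun i t hi => (hσ i t hi).1
  obtain ⟨mu, rfl⟩ := exists_eq_permMat_mul_diagonal fun i t hi => (hσ i t hi).2.1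
  obtain ⟨nu, rfl⟩ := exists_eq_permMat_mul_diagonal fun i t hi => (hσ i t hi).2.2
  have hprod : ∀ t, lam t * mu t * nu t = 1 := fun t => by
    rw [← actT_permMat_mul_diagonal_unitTensor_apply, hfix]
    simp [unitTensor]
  refine ⟨⟨(σ, lam, mu, nu), ⟨hprod, rfl, rfl, rfl⟩, ?_⟩, ?_⟩
  · rintro ⟨τ, lam', mu', nu'⟩ ⟨-, hlam, hmu, hnu⟩
    obtain rfl : σ = τ :=
      perm_eq_of_permMat_mul_diagonal_eq (fun t h0 => by simpa [h0] using hprod t) hlam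
    simp only [permMat_mul_diagonal_injective σ hlam, permMat_mul_diagonal_injective σ hmu,
      permMat_mul_diagonal_injective σ hnu]
  · rintro d₁ d₂ d₃ ⟨a, b, c, habc, rfl, rfl, rfl⟩
    exact ⟨a ∘ σ.symm, b ∘ σ.symm, c ∘ σ.symm, fun i => habc _,
      permMat_mul_diagonal_conj_diagonal hf a, permMat_mul_diagonal_conj_diagonal hg b,
      permMat_mul_diagonal_conj_diagonal hh c⟩
end

section
/- Let W be the span of the e_i⊗e_j⊗e_k with min(j,k) < i, and let g' be the set of triples (x,y,z) ∈ gl_n(ℂ)³ such that for all w ∈ W, the derivation action (x,y,z).(M_⟨1⟩^⊕n + w) lies in the span of M_⟨1⟩^⊕n and W. Then every (x,y,z) ∈ g' has x lower triangular, y and z upper triangular, and satisfies x_{σσ}+y_{σσ}+z_{σσ} = x_{11}+y_{11}+z_{11} for all σ; consequently dim g' = (3n²+n−2)/2 + 2 as a subspace of gl_n(ℂ)³ (i.e., its image modulo the 2-dimensional kernel of the action has dimension (3n²+n−2)/2). -/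
/-!
Taking `w = 0`, the coordinate of `(x,y,z).M⟨1⟩^⊕n` at `(i,j,k)` is
`δⱼₖ xᵢⱼ + δᵢₖ yⱼᵢ + δᵢⱼ z_kⱼ`. Since `⟨M⟨1⟩^⊕n⟩ ⊕ W` consists of the tensors whose coordinates
with `i ≤ min(j,k)` vanish off the diagonal and are constant on it, this forces `x` lower
triangular, `y, z` upper triangular and `xσσ + yσσ + zσσ` constant. Conversely such triples
preserve `W`, since a lower triangular `x` can only raise the first index and upper triangular
`y, z` can only lower the other two. So `g'` is parametrised by `x` on and below the diagonal, `y` on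
and above it, `z` strictly above it and the common diagonal sum.
-/

open scoped BigOperators

/-- The basis tensor `eᵢ⊗eⱼ⊗e_k`. -/
noncomputable def basisTensor {n : ℕ} (i j k : Fin n) : Fin n → Fin n → Fin n → ℂ :=
  fun a b c => if a = i ∧ b = j ∧ c = k then 1 else 0

/-- The derivation action `(x,y,z).(a⊗b⊗c) = xa⊗b⊗c + a⊗yb⊗c + a⊗b⊗zc` in coordinates. -/
noncomputable def lieAct {n : ℕ} (x y z : Matrix (Fin n) (Fin n) ℂ)
    (T : Fin n → Fin n → Fin n → ℂ) : Fin n → Fin n → Fin n → ℂ :=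
  fun i j k => (∑ l, x i l * T l j k) + (∑ l, y j l * T i l k) + (∑ l, z k l * T i j l)

/-- The subspace `W` spanned by the `eᵢ⊗eⱼ⊗e_k` with `min(j,k) < i`. -/
noncomputable def Wspace (n : ℕ) : Submodule ℂ (Fin n → Fin n → Fin n → ℂ) :=
  Submodule.span ℂ {T | ∃ i j k : Fin n, min j k < i ∧ T = basisTensor i j k}

/-- The Lie algebra `g'` of triples `(x,y,z)` with
`(x,y,z).(M⟨1⟩^⊕n + w) ∈ ⟨M⟨1⟩^⊕n, W⟩` for all `w ∈ W`. -/
noncomputable def gPrime (n : ℕ) :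
    Submodule ℂ (Matrix (Fin n) (Fin n) ℂ × Matrix (Fin n) (Fin n) ℂ × Matrix (Fin n) (Fin n) ℂ) where
  carrier := {p | ∀ w ∈ Wspace n,
    lieAct p.1 p.2.1 p.2.2 (unitTensor n + w) ∈ Submodule.span ℂ {unitTensor n} ⊔ Wspace n}
  add_mem' := by
    intro a b ha hb w hw
    have key : lieAct (a + b).1 (a + b).2.1 (a + b).2.2 (unitTensor n + w)
        = lieAct a.1 a.2.1 a.2.2 (unitTensor n + w)
          + lieAct b.1 b.2.1 b.2.2 (unitTensor n + w) := by
      funext i j k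
      simp only [lieAct, Prod.fst_add, Prod.snd_add, Matrix.add_apply, Pi.add_apply,
        add_mul, Finset.sum_add_distrib]
      ring
    rw [key]
    exact Submodule.add_mem _ (ha w hw) (hb w hw)
  zero_mem' := by
    intro w hw
    have key : lieAct (0 : Matrix (Fin n) (Fin n) ℂ × Matrix (Fin n) (Fin n) ℂ × Matrix (Fin n) (Fin n) ℂ).1
        (0 : Matrix (Fin n) (Fin n) ℂ × Matrix (Fin n) (Fin n) ℂ × Matrix (Fin n) (Fin n) ℂ).2.1
        (0 : Matrix (Fin n) (Fin n) ℂ × Matrix (Fin n) (Fin n) ℂ × Matrix (Fin n) (Fin n) ℂ).2.2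
        (unitTensor n + w) = 0 := by
      funext i j k
      show (∑ l, (0 : Matrix (Fin n) (Fin n) ℂ) i l * _) + (∑ l, (0 : Matrix (Fin n) (Fin n) ℂ) j l * _)
          + (∑ l, (0 : Matrix (Fin n) (Fin n) ℂ) k l * _) = 0
      simp
    rw [key]
    exact Submodule.zero_mem _
  smul_mem' := by
    intro c a ha w hw
    have key : lieAct (c • a.1) (c • a.2.1) (c • a.2.2) (unitTensor n + w)
        = c • lieAct a.1 a.2.1 a.2.2 (unitTensor n + w) := by
      funext i j k
      simp only [lieAct, Matrix.smul_apply, Pi.smul_apply, smul_eq_mul, Finset.mul_sum,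
        mul_add]
      ring
    rw [Set.mem_setOf_eq] at ha
    simpa [key] using Submodule.smul_mem _ c (ha w hw)

open Finset

section Tensors

variable {n : ℕ}

theorem tensor_eq_sum_basisTensor (T : Fin n → Fin n → Fin n → ℂ) :
    T = ∑ i, ∑ j, ∑ k, T i j k • basisTensor i j k := by
  funext a b c
  simp [basisTensor, ite_and, Finset.sum_apply]

theorem mem_Wspace_iff {T : Fin n → Fin n → Fin n → ℂ} :
    T ∈ Wspace n ↔ ∀ i j k, i ≤ j → i ≤ k → T i j k = 0 := by
  constructor
  · intro hT
    induction hT using Submodule.span_induction with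
    | mem S hS =>
      obtain ⟨i', j', k', hlt, rfl⟩ := hS
      intro i j k hij hik
      simp only [basisTensor, ite_eq_right_iff, and_imp]
      rintro rfl rfl rfl
      exact absurd hlt (not_lt.2 (le_min hij hik))
    | zero => intros; rfl
    | add S T _ _ hS hT => intro i j k hij hik; simp [hS i j k hij hik, hT i j k hij hik]
    | smul c S _ hS => intro i j k hij hik; simp [hS i j k hij hik]
  · intro h
    rw [tensor_eq_sum_basisTensor T]
    refine sum_mem fun i _ => sum_mem fun j _ => sum_mem fun k _ => ?_
    rcases le_or_gt i (min j k) with hle | hlt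
    · simp [h i j k (le_min_iff.1 hle).1 (le_min_iff.1 hle).2]
    · exact Submodule.smul_mem _ _ (Submodule.subset_span ⟨i, j, k, hlt, rfl⟩)

theorem mem_span_unitTensor_sup_Wspace_iff {T : Fin n → Fin n → Fin n → ℂ} :
    T ∈ Submodule.span ℂ {unitTensor n} ⊔ Wspace n ↔
      ∃ c : ℂ, ∀ i j k, i ≤ j → i ≤ k → T i j k = if i = j ∧ j = k then c else 0 := by
  rw [Submodule.mem_sup]
  constructor
  · rintro ⟨_, hu, w, hw, rfl⟩
    obtain ⟨c, rfl⟩ := Submodule.mem_span_singleton.1 hu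
    refine ⟨c, fun i j k hij hik => ?_⟩
    simp [unitTensor, mem_Wspace_iff.1 hw i j k hij hik]
  · rintro ⟨c, hc⟩
    refine ⟨c • unitTensor n, Submodule.mem_span_singleton.2 ⟨c, rfl⟩,
      T - c • unitTensor n, mem_Wspace_iff.2 fun i j k hij hik => ?_, add_sub_cancel _ _⟩
    simp [unitTensor, hc i j k hij hik]

theorem lieAct_add_right (x y z : Matrix (Fin n) (Fin n) ℂ) (S T : Fin n → Fin n → Fin n → ℂ) :
    lieAct x y z (S + T) = lieAct x y z S + lieAct x y z T := by
  funext i j k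
  simp only [lieAct, Pi.add_apply, mul_add, sum_add_distrib]
  ring

theorem lieAct_unitTensor_apply (x y z : Matrix (Fin n) (Fin n) ℂ) (i j k : Fin n) :
    lieAct x y z (unitTensor n) i j k =
      (if j = k then x i j else 0) + (if i = k then y j i else 0) +
        (if i = j then z k j else 0) := by
  simp [lieAct, unitTensor, ite_and, eq_comm]

theorem lieAct_mem_Wspace {x y z : Matrix (Fin n) (Fin n) ℂ}
    (hx : ∀ σ ρ, σ < ρ → x σ ρ = 0) (hy : ∀ σ ρ, ρ < σ → y σ ρ = 0)
    (hz : ∀ σ ρ, ρ < σ → z σ ρ = 0) {w : Fin n → Fin n → Fin n → ℂ} (hw : w ∈ Wspace n) :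
    lieAct x y z w ∈ Wspace n := by
  rw [mem_Wspace_iff] at hw ⊢
  intro i j k hij hik
  have hx' : ∀ l, x i l * w l j k = 0 := fun l => by
    rcases le_or_gt l i with h | h
    · rw [hw l j k (h.trans hij) (h.trans hik), mul_zero]
    · rw [hx i l h, zero_mul]
  have hy' : ∀ l, y j l * w i l k = 0 := fun l => by
    rcases le_or_gt j l with h | h
    · rw [hw i l k (hij.trans h) hik, mul_zero]
    · rw [hy j l h, zero_mul]
  have hz' : ∀ l, z k l * w i j l = 0 := fun l => by
    rcases le_or_gt k l with h | h
    · rw [hw i j l hij (hik.trans h), mul_zero]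
    · rw [hz k l h, zero_mul]
  simp [lieAct, hx', hy', hz']

end Tensors

def triangularTriples (n : ℕ) :
    Submodule ℂ (Matrix (Fin n) (Fin n) ℂ × Matrix (Fin n) (Fin n) ℂ × Matrix (Fin n) (Fin n) ℂ) where
  carrier := {p | (∀ σ ρ, σ < ρ → p.1 σ ρ = 0) ∧ (∀ σ ρ, ρ < σ → p.2.1 σ ρ = 0) ∧
    (∀ σ ρ, ρ < σ → p.2.2 σ ρ = 0) ∧ ∃ c, ∀ σ, p.1 σ σ + p.2.1 σ σ + p.2.2 σ σ = c}
  add_mem' := by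
    rintro a b ⟨hax, hay, haz, ca, hca⟩ ⟨hbx, hby, hbz, cb, hcb⟩
    refine ⟨fun σ ρ h => ?_, fun σ ρ h => ?_, fun σ ρ h => ?_, ca + cb, fun σ => ?_⟩
    · simp [hax σ ρ h, hbx σ ρ h]
    · simp [hay σ ρ h, hby σ ρ h]
    · simp [haz σ ρ h, hbz σ ρ h]
    · simp only [Prod.fst_add, Prod.snd_add, Matrix.add_apply]
      linear_combination hca σ + hcb σ
  zero_mem' := ⟨fun _ _ _ => rfl, fun _ _ _ => rfl, fun _ _ _ => rfl, 0, fun _ => by simp⟩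
  smul_mem' := by
    rintro t a ⟨hax, hay, haz, c, hc⟩
    refine ⟨fun σ ρ h => ?_, fun σ ρ h => ?_, fun σ ρ h => ?_, t * c, fun σ => ?_⟩
    · simp [hax σ ρ h]
    · simp [hay σ ρ h]
    · simp [haz σ ρ h]
    · simp only [Prod.smul_fst, Prod.smul_snd, Matrix.smul_apply, smul_eq_mul]
      linear_combination t * hc σ

theorem gPrime_eq_triangularTriples (n : ℕ) : gPrime n = triangularTriples n := by
  ext ⟨x, y, z⟩
  constructor
  · intro hp
    obtain ⟨c, hc⟩ := mem_span_unitTensor_sup_Wspace_iff.1 (by simpa using hp 0 (zero_mem _))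
    simp only [lieAct_unitTensor_apply] at hc
    refine ⟨fun σ ρ h => ?_, fun σ ρ h => ?_, fun σ ρ h => ?_, c, fun σ => ?_⟩
    · simpa [h.ne] using hc σ ρ ρ h.le h.le
    · simpa [h.ne, h.ne'] using hc ρ σ ρ h.le le_rfl
    · simpa [h.ne, h.ne'] using hc ρ ρ σ le_rfl h.le
    · simpa using hc σ σ σ le_rfl le_rfl
  · rintro ⟨hx, hy, hz, c, hc⟩ w hw
    dsimp only at hx hy hz hc
    rw [lieAct_add_right]
    refine Submodule.add_mem _ (mem_span_unitTensor_sup_Wspace_iff.2 ⟨c, fun i j k hij hik => ?_⟩)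
      (Submodule.mem_sup_right (lieAct_mem_Wspace hx hy hz hw))
    rw [lieAct_unitTensor_apply]
    rcases hij.eq_or_lt with rfl | hij <;> rcases hik.eq_or_lt with rfl | hik
    · simp [hc]
    · simp [hik.ne, hz k i hik]
    · simp [hij.ne, hij.ne', hy j i hij]
    · simp [hij.ne, hik.ne, hx i j hij]

theorem card_subtype_snd_lt_fst (n : ℕ) :
    Fintype.card {p : Fin n × Fin n // p.2 < p.1} = n * (n - 1) / 2 := by
  rw [Fintype.card_congr (Equiv.subtypeProdEquivSigmaSubtype fun a b : Fin n => b < a),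
    Fintype.card_sigma]
  simp only [Fintype.card_subtype, filter_gt_eq_Iio, Fin.card_Iio]
  rw [Fin.sum_univ_eq_sum_range (fun i => i) n, sum_range_id]

theorem card_subtype_snd_le_fst (n : ℕ) :
    Fintype.card {p : Fin n × Fin n // p.2 ≤ p.1} = n + n * (n - 1) / 2 := by
  rw [Fintype.card_congr (Equiv.subtypeProdEquivSigmaSubtype fun a b : Fin n => b ≤ a),
    Fintype.card_sigma]
  simp only [Fintype.card_subtype, filter_ge_eq_Iic, Fin.card_Iic]
  rw [Fin.sum_univ_eq_sum_range (fun i => i + 1) n, sum_add_distrib, sum_range_id]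
  simp [add_comm]

theorem card_subtype_swap {α : Type*} [Fintype α] (r : α → α → Prop) [DecidableRel r] :
    Fintype.card {p : α × α // r p.1 p.2} = Fintype.card {p : α × α // r p.2 p.1} :=
  Fintype.card_congr (Equiv.subtypeEquiv (Equiv.prodComm _ _) fun _ => Iff.rfl)

section Dimension

variable {n : ℕ}

-- The diagonal of `z` is recovered from those of `x`, `y` and the common diagonal sum.
def triangularCoords (σ₀ : Fin n) :
    (Matrix (Fin n) (Fin n) ℂ × Matrix (Fin n) (Fin n) ℂ × Matrix (Fin n) (Fin n) ℂ) →ₗ[ℂ]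
      ({p : Fin n × Fin n // p.2 ≤ p.1} → ℂ) × ({p : Fin n × Fin n // p.1 ≤ p.2} → ℂ) ×
        ({p : Fin n × Fin n // p.1 < p.2} → ℂ) × ℂ where
  toFun p := (fun s => p.1 s.1.1 s.1.2, fun s => p.2.1 s.1.1 s.1.2, fun s => p.2.2 s.1.1 s.1.2,
    p.1 σ₀ σ₀ + p.2.1 σ₀ σ₀ + p.2.2 σ₀ σ₀)
  map_add' a b := by ext <;> simp; ring
  map_smul' t a := by ext <;> simp; ring

theorem triangularCoords_comp_subtype_injective (σ₀ : Fin n) :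
    Function.Injective ((triangularCoords σ₀).comp (triangularTriples n).subtype) := by
  rw [← LinearMap.ker_eq_bot, LinearMap.ker_eq_bot']
  rintro ⟨⟨x, y, z⟩, hx, hy, hz, c, hc⟩ h
  dsimp only at hx hy hz hc
  simp only [LinearMap.comp_apply, Submodule.subtype_apply, triangularCoords, LinearMap.coe_mk,
    AddHom.coe_mk, Prod.mk_eq_zero, funext_iff] at h
  obtain ⟨hxl, hyu, hzu, h0⟩ := h
  have hx0 : x = 0 := funext₂ fun σ ρ => (le_or_gt ρ σ).elim (fun h => hxl ⟨(σ, ρ), h⟩) (hx σ ρ)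
  have hy0 : y = 0 := funext₂ fun σ ρ => (le_or_gt σ ρ).elim (fun h => hyu ⟨(σ, ρ), h⟩) (hy σ ρ)
  have hc0 : c = 0 := by simpa [← hc σ₀, hx0, hy0] using h0
  have hz0 : z = 0 := funext₂ fun σ ρ => by
    rcases lt_trichotomy σ ρ with h | rfl | h
    · exact hzu ⟨(σ, ρ), h⟩
    · simpa [hx0, hy0, hc0] using hc σ
    · exact hz σ ρ h
  simp [hx0, hy0, hz0]

theorem triangularCoords_comp_subtype_surjective (σ₀ : Fin n) :
    Function.Surjective ((triangularCoords σ₀).comp (triangularTriples n).subtype) := by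
  rintro ⟨f, g, h, s⟩
  let x : Matrix (Fin n) (Fin n) ℂ := fun σ ρ => if hρσ : ρ ≤ σ then f ⟨(σ, ρ), hρσ⟩ else 0
  let y : Matrix (Fin n) (Fin n) ℂ := fun σ ρ => if hσρ : σ ≤ ρ then g ⟨(σ, ρ), hσρ⟩ else 0
  let z : Matrix (Fin n) (Fin n) ℂ := fun σ ρ =>
    if hσρ : σ < ρ then h ⟨(σ, ρ), hσρ⟩ else if σ = ρ then s - x σ σ - y σ σ else 0
  have hz : ∀ σ, z σ σ = s - x σ σ - y σ σ := fun σ => by simp [z]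
  refine ⟨⟨(x, y, z), fun σ ρ hσρ => dif_neg hσρ.not_ge, fun σ ρ hρσ => dif_neg hρσ.not_ge,
    fun σ ρ hρσ => by simp [z, hρσ.not_gt, hρσ.ne'], s, fun σ => by simp only [hz]; ring⟩, ?_⟩
  refine Prod.ext (funext fun p => dif_pos p.2) (Prod.ext (funext fun p => dif_pos p.2)
    (Prod.ext (funext fun p => dif_pos p.2) ?_))
  change x σ₀ σ₀ + y σ₀ σ₀ + z σ₀ σ₀ = s
  rw [hz]
  ring

theorem finrank_triangularTriples (hn : 1 ≤ n) :
    Module.finrank ℂ (triangularTriples n) = (3 * n ^ 2 + n - 2) / 2 + 2 := by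
  let σ₀ : Fin n := ⟨0, hn⟩
  rw [(LinearEquiv.ofBijective _ ⟨triangularCoords_comp_subtype_injective σ₀,
    triangularCoords_comp_subtype_surjective σ₀⟩).finrank_eq]
  simp only [Module.finrank_prod, Module.finrank_fintype_fun_eq_card, Module.finrank_self,
    card_subtype_swap (α := Fin n) (· ≤ ·), card_subtype_swap (α := Fin n) (· < ·),
    card_subtype_snd_le_fst, card_subtype_snd_lt_fst]
  have hgauss : n * (n - 1) / 2 * 2 + n = n ^ 2 := by
    rw [← sum_range_id, sum_range_id_mul_two]
    cases n <;> simp; ring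
  omega

end Dimension

/-- Every `(x,y,z) ∈ g'` has `x` lower triangular, `y, z` upper triangular, and constant
diagonal sums; consequently `dim g' = (3n²+n−2)/2 + 2` (inside `gl_n³`, before quotienting by
the 2-dimensional kernel of the action). -/
theorem gPrime_structure {n : ℕ} (hn : 1 ≤ n) :
    (∀ p ∈ gPrime n,
      (∀ σ ρ : Fin n, σ < ρ → p.1 σ ρ = 0) ∧
      (∀ σ ρ : Fin n, ρ < σ → p.2.1 σ ρ = 0) ∧
      (∀ σ ρ : Fin n, ρ < σ → p.2.2 σ ρ = 0) ∧
      (∀ σ : Fin n, p.1 σ σ + p.2.1 σ σ + p.2.2 σ σ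
        = p.1 ⟨0, hn⟩ ⟨0, hn⟩ + p.2.1 ⟨0, hn⟩ ⟨0, hn⟩ + p.2.2 ⟨0, hn⟩ ⟨0, hn⟩)) ∧
    Module.finrank ℂ (gPrime n) = (3 * n ^ 2 + n - 2) / 2 + 2 := by
  rw [gPrime_eq_triangularTriples]
  refine ⟨fun p ⟨hx, hy, hz, c, hc⟩ => ⟨hx, hy, hz, fun σ => (hc σ).trans (hc _).symm⟩,
    finrank_triangularTriples hn⟩
end
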